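/- arXiv:2302.05072 — 2 statements merged into one kernel-verified Lean document; each statement's English description precedes it below -/
import Mathlib

section
/- Let A00, A0, A1 be complete subalgebras of a complete Boolean algebra A with A00 ⊆ A0 and A00 ⊆ A1. Then projections in the diagram (A00; A0, A1; A) are correct (i.e., whenever a0 ∈ A0 and a1 ∈ A1 are nonzero with h_{A00}(a0) = h_{A00}(a1), then a0 ⊓ a1 ≠ ⊥) if and only if the following lifting property holds: for all x0 ∈ X_{A0} and x1 ∈ X_{A1} whose restrictions to A00 (compositions with the inclusion homomorphisms) coincide, there exists x ∈ X_A whose restriction to A0 is x0 and whose restriction to A1 is x1. -/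
/-- A complete subalgebra of a complete Boolean algebra `A`: a subset containing `⊥`,
closed under complementation and under suprema of arbitrary subsets. -/
structure CompleteSubalgebra {A : Type*} [CompleteBooleanAlgebra A] (S : Set A) : Prop where
  bot_mem : ⊥ ∈ S
  compl_mem : ∀ a ∈ S, aᶜ ∈ S
  sSup_mem : ∀ T ⊆ S, sSup T ∈ S

/-- The projection onto a complete subalgebra: `h_S(a) = sInf {s ∈ S : a ≤ s}`. -/
def projSub {A : Type*} [CompleteBooleanAlgebra A] (S : Set A) (a : A) : A :=
  sInf {s | s ∈ S ∧ a ≤ s}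

/-- `x : A → Bool` is, on the subalgebra `S`, a bounded lattice homomorphism to `Bool`
(i.e. it determines a point of the Stone space of `S`). -/
def IsHomOn {A : Type*} [CompleteBooleanAlgebra A] (S : Set A) (x : A → Bool) : Prop :=
  x ⊤ = true ∧ x ⊥ = false ∧
  (∀ a ∈ S, ∀ b ∈ S, x (a ⊓ b) = (x a && x b)) ∧
  (∀ a ∈ S, ∀ b ∈ S, x (a ⊔ b) = (x a || x b))

/-!
Points of a Stone space are ultrafilters, and by the prime ideal theorem every proper filter base
of `A` extends to one. If projections are correct and `x₀, x₁` agree on `A₀₀`, then `b₀ ⊓ b₁ ≠ ⊥`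
whenever `x₀ b₀ = x₁ b₁ = true`: with `h = projSub A₀₀`, the elements `b₀ ⊓ h b₁ ∈ A₀` and
`b₁ ⊓ h b₀ ∈ A₁` are nonzero and have the same projection `h b₀ ⊓ h b₁`, because
`h (a ⊓ s) = h a ⊓ s` for `s ∈ A₀₀`. So these meets generate a proper filter, and any ultrafilter
containing it lifts both `x₀` and `x₁`. Conversely, given `h a₀ = h a₁` with `a₀ ≠ ⊥`, pick an
ultrafilter `x₀ ∋ a₀`; by the same identity `a₁` meets every `s ∈ A₀₀` with `x₀ s`, so there is an
ultrafilter `x₁ ∋ a₁` agreeing with `x₀` on `A₀₀`, and a common lift of the two contains `a₀ ⊓ a₁`.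
-/

open Set Order
open scoped SetFamily

section

variable {A : Type*} [CompleteBooleanAlgebra A]

namespace CompleteSubalgebra

variable {S : Set A}

theorem top_mem (hS : CompleteSubalgebra S) : (⊤ : A) ∈ S := by
  simpa using hS.compl_mem ⊥ hS.bot_mem

theorem sup_mem (hS : CompleteSubalgebra S) {a b : A} (ha : a ∈ S) (hb : b ∈ S) : a ⊔ b ∈ S := by
  simpa using hS.sSup_mem {a, b} (pair_subset ha hb)

theorem inf_mem (hS : CompleteSubalgebra S) {a b : A} (ha : a ∈ S) (hb : b ∈ S) : a ⊓ b ∈ S := by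
  simpa using hS.compl_mem _ (hS.sup_mem (hS.compl_mem a ha) (hS.compl_mem b hb))

theorem infClosed (hS : CompleteSubalgebra S) : InfClosed S := fun _ ha _ hb => hS.inf_mem ha hb

theorem sInf_mem (hS : CompleteSubalgebra S) {T : Set A} (hT : T ⊆ S) : sInf T ∈ S := by
  simpa [← compl_sInf'] using
    hS.compl_mem _ (hS.sSup_mem _ (image_subset_iff.2 fun t ht => hS.compl_mem t (hT ht)))

end CompleteSubalgebra

section projSub

variable {S : Set A}

theorem projSub_mem (hS : CompleteSubalgebra S) (a : A) : projSub S a ∈ S :=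
  hS.sInf_mem fun _ hs => hs.1

theorem le_projSub (S : Set A) (a : A) : a ≤ projSub S a := le_sInf fun _ hs => hs.2

theorem projSub_le_iff {a s : A} (hs : s ∈ S) : projSub S a ≤ s ↔ a ≤ s :=
  ⟨(le_projSub S a).trans, fun h => sInf_le ⟨hs, h⟩⟩

theorem projSub_eq_bot_iff (hS : CompleteSubalgebra S) {a : A} : projSub S a = ⊥ ↔ a = ⊥ := by
  simp only [← le_bot_iff, projSub_le_iff hS.bot_mem]

theorem projSub_inf (hS : CompleteSubalgebra S) (a : A) {s : A} (hs : s ∈ S) :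
    projSub S (a ⊓ s) = projSub S a ⊓ s := by
  refine le_antisymm ((projSub_le_iff (hS.inf_mem (projSub_mem hS a) hs)).2
    (inf_le_inf_right s (le_projSub S a))) ?_
  have himp_mem : s ⇨ projSub S (a ⊓ s) ∈ S := by
    rw [himp_eq]; exact hS.sup_mem (projSub_mem hS _) (hS.compl_mem s hs)
  rw [← le_himp_iff, projSub_le_iff himp_mem, le_himp_iff]
  exact le_projSub S _

end projSub

namespace IsHomOn

variable {S : Set A} {x y : A → Bool}

theorem mono {T : Set A} (hx : IsHomOn T x) (hST : S ⊆ T) : IsHomOn S x :=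
  ⟨hx.1, hx.2.1, fun a ha b hb => hx.2.2.1 a (hST ha) b (hST hb),
    fun a ha b hb => hx.2.2.2 a (hST ha) b (hST hb)⟩

theorem ne_bot (hx : IsHomOn S x) {a : A} (hxa : x a = true) : a ≠ ⊥ := by
  rintro rfl; simp [hx.2.1] at hxa

theorem apply_inf (hx : IsHomOn S x) {a b : A} (ha : a ∈ S) (hb : b ∈ S)
    (hxa : x a = true) (hxb : x b = true) : x (a ⊓ b) = true := by
  rw [hx.2.2.1 a ha b hb, hxa, hxb, Bool.and_self]

theorem eq_true_of_le (hx : IsHomOn S x) {a b : A} (ha : a ∈ S) (hb : b ∈ S) (hab : a ≤ b)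
    (hxa : x a = true) : x b = true := by
  simpa [inf_eq_left.2 hab, hxa] using hx.2.2.1 a ha b hb

theorem apply_compl (hx : IsHomOn S x) {a : A} (ha : a ∈ S) (hac : aᶜ ∈ S) :
    x aᶜ = !x a := by
  have hinf := hx.2.2.1 a ha aᶜ hac
  have hsup := hx.2.2.2 a ha aᶜ hac
  rw [inf_compl_eq_bot, hx.2.1] at hinf
  rw [sup_compl_eq_top, hx.1] at hsup
  revert hinf hsup
  cases x a <;> cases x aᶜ <;> simp

theorem eqOn_of_imp (hx : IsHomOn S x) (hy : IsHomOn S y) (hS : ∀ a ∈ S, aᶜ ∈ S)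
    (h : ∀ a ∈ S, y a = true → x a = true) : EqOn x y S := by
  intro a ha
  cases hya : y a
  · have := h aᶜ (hS a ha) (by rw [hy.apply_compl ha (hS a ha), hya]; rfl)
    rw [hx.apply_compl ha (hS a ha)] at this
    simpa using this
  · exact h a ha hya

theorem infClosed_setOf (hx : IsHomOn S x) (hS : InfClosed S) :
    InfClosed {a | a ∈ S ∧ x a = true} :=
  fun _ ha _ hb => ⟨hS ha.1 hb.1, hx.apply_inf ha.1 hb.1 ha.2 hb.2⟩

end IsHomOn

theorem InfClosed.infs {α : Type*} [SemilatticeInf α] {s t : Set α} (hs : InfClosed s)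
    (ht : InfClosed t) : InfClosed (s ⊼ t) :=
  infs_self_subset.1 <| by
    rw [infs_infs_infs_comm]; exact infs_subset (infs_self_subset.2 hs) (infs_self_subset.2 ht)

theorem exists_isHomOn_univ_of_infClosed {B : Set A} (hB : InfClosed B) (hne : B.Nonempty)
    (hbot : ⊥ ∉ B) : ∃ x : A → Bool, IsHomOn univ x ∧ ∀ a ∈ B, x a = true := by
  have hF : IsPFilter (upperClosure B : Set A) := by
    refine IsPFilter.of_def (hne.mono subset_upperClosure) ?_
      fun hab ha => (upperClosure B).upper hab ha
    rintro _ ⟨a, ha, hac⟩ _ ⟨b, hb, hbd⟩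
    exact ⟨a ⊓ b, subset_upperClosure (hB ha hb), inf_le_left.trans hac, inf_le_right.trans hbd⟩
  have hdisj : Disjoint (hF.toPFilter : Set A) (Ideal.principal (⊥ : A) : Set A) := by
    refine Set.disjoint_left.2 fun a ⟨b, hb, hba⟩ ha => hbot ?_
    rwa [le_bot_iff.1 (hba.trans (Ideal.mem_principal.1 ha))] at hb
  obtain ⟨J, hJ, -, hFJ⟩ := DistribLattice.prime_ideal_of_disjoint_filter_ideal hdisj
  classical
  refine ⟨fun a => decide (a ∉ J), ⟨?_, ?_, ?_, ?_⟩, fun a ha => ?_⟩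
  · simpa using hJ.toIsProper.top_notMem
  · simp
  · intro a _ b _
    have : a ⊓ b ∈ J ↔ a ∈ J ∨ b ∈ J :=
      ⟨hJ.mem_or_mem, fun h => h.elim (J.lower inf_le_left) (J.lower inf_le_right)⟩
    simp [this, not_or]
  · intro a _ b _
    simp [Ideal.sup_mem_iff, imp_iff_not_or]
  · simpa using Set.disjoint_left.1 hFJ (subset_upperClosure ha)

theorem exists_isHomOn_univ_eqOn_of_inf_ne_bot {S : Set A} (hS : CompleteSubalgebra S)
    {x₀ : A → Bool} (hx₀ : IsHomOn S x₀) {a : A} (ha : ∀ s ∈ S, x₀ s = true → a ⊓ s ≠ ⊥) :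
    ∃ x : A → Bool, IsHomOn univ x ∧ x a = true ∧ EqOn x x₀ S := by
  obtain ⟨x, hx, hxB⟩ := exists_isHomOn_univ_of_infClosed
    (infClosed_singleton.infs (hx₀.infClosed_setOf hS.infClosed))
    ⟨_, inf_mem_infs rfl ⟨hS.top_mem, hx₀.1⟩⟩
    (by rintro ⟨_, rfl, s, ⟨hs, hxs⟩, h⟩; exact ha s hs hxs h)
  refine ⟨x, hx, by simpa using hxB _ (inf_mem_infs rfl ⟨hS.top_mem, hx₀.1⟩),
    (hx.mono (subset_univ S)).eqOn_of_imp hx₀ hS.compl_mem fun s hs hxs => ?_⟩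
  exact hx.eq_true_of_le trivial trivial inf_le_right (hxB _ (inf_mem_infs rfl ⟨hs, hxs⟩))

theorem inf_ne_bot_of_projSub_eq {S : Set A} (hS : CompleteSubalgebra S) {a b s : A}
    (h : projSub S a = projSub S b) (hs : s ∈ S) (hne : a ⊓ s ≠ ⊥) : b ⊓ s ≠ ⊥ := by
  rwa [ne_eq, ← projSub_eq_bot_iff hS, projSub_inf hS _ hs, h, ← projSub_inf hS _ hs,
    projSub_eq_bot_iff hS] at hne

section Diagram

variable (A₀₀ A₀ A₁ : Set A)

def IsCorrectDiagram : Prop :=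
  ∀ a₀ ∈ A₀, ∀ a₁ ∈ A₁, a₀ ≠ ⊥ → a₁ ≠ ⊥ → projSub A₀₀ a₀ = projSub A₀₀ a₁ → a₀ ⊓ a₁ ≠ ⊥

def HasLiftingProperty : Prop :=
  ∀ x₀ x₁ : A → Bool, IsHomOn A₀ x₀ → IsHomOn A₁ x₁ → (∀ a ∈ A₀₀, x₀ a = x₁ a) →
    ∃ x : A → Bool, IsHomOn univ x ∧ (∀ a ∈ A₀, x a = x₀ a) ∧ (∀ a ∈ A₁, x a = x₁ a)

variable {A₀₀ A₀ A₁}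

theorem IsCorrectDiagram.inf_ne_bot (hcorr : IsCorrectDiagram A₀₀ A₀ A₁)
    (h₀₀ : CompleteSubalgebra A₀₀) (h₀ : CompleteSubalgebra A₀) (h₁ : CompleteSubalgebra A₁)
    (h₀₀₀ : A₀₀ ⊆ A₀) (h₀₀₁ : A₀₀ ⊆ A₁) {x₀ x₁ : A → Bool} (hx₀ : IsHomOn A₀ x₀)
    (hx₁ : IsHomOn A₁ x₁) (hagree : ∀ a ∈ A₀₀, x₀ a = x₁ a) {b₀ b₁ : A} (hb₀ : b₀ ∈ A₀)
    (hb₁ : b₁ ∈ A₁) (hxb₀ : x₀ b₀ = true) (hxb₁ : x₁ b₁ = true) : b₀ ⊓ b₁ ≠ ⊥ := by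
  set c₀ := projSub A₀₀ b₀
  set c₁ := projSub A₀₀ b₁
  have hc₀ : c₀ ∈ A₀₀ := projSub_mem h₀₀ b₀
  have hc₁ : c₁ ∈ A₀₀ := projSub_mem h₀₀ b₁
  have hx₀c₁ : x₀ c₁ = true :=
    (hagree c₁ hc₁).trans (hx₁.eq_true_of_le hb₁ (h₀₀₁ hc₁) (le_projSub _ _) hxb₁)
  have hx₁c₀ : x₁ c₀ = true :=
    (hagree c₀ hc₀).symm.trans (hx₀.eq_true_of_le hb₀ (h₀₀₀ hc₀) (le_projSub _ _) hxb₀)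
  have hcorr' := hcorr (b₀ ⊓ c₁) (h₀.inf_mem hb₀ (h₀₀₀ hc₁)) (b₁ ⊓ c₀) (h₁.inf_mem hb₁ (h₀₀₁ hc₀))
    (hx₀.ne_bot (hx₀.apply_inf hb₀ (h₀₀₀ hc₁) hxb₀ hx₀c₁))
    (hx₁.ne_bot (hx₁.apply_inf hb₁ (h₀₀₁ hc₀) hxb₁ hx₁c₀))
    (by rw [projSub_inf h₀₀ _ hc₁, projSub_inf h₀₀ _ hc₀, inf_comm])
  exact fun h => hcorr' (le_bot_iff.1 (h ▸ inf_le_inf inf_le_left inf_le_left))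

theorem IsCorrectDiagram.hasLiftingProperty (hcorr : IsCorrectDiagram A₀₀ A₀ A₁)
    (h₀₀ : CompleteSubalgebra A₀₀) (h₀ : CompleteSubalgebra A₀) (h₁ : CompleteSubalgebra A₁)
    (h₀₀₀ : A₀₀ ⊆ A₀) (h₀₀₁ : A₀₀ ⊆ A₁) : HasLiftingProperty A₀₀ A₀ A₁ := by
  intro x₀ x₁ hx₀ hx₁ hagree
  have htop : ⊤ ⊓ ⊤ ∈ {a | a ∈ A₀ ∧ x₀ a = true} ⊼ {a | a ∈ A₁ ∧ x₁ a = true} :=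
    inf_mem_infs ⟨h₀.top_mem, hx₀.1⟩ ⟨h₁.top_mem, hx₁.1⟩
  obtain ⟨x, hx, hxB⟩ := exists_isHomOn_univ_of_infClosed
    ((hx₀.infClosed_setOf h₀.infClosed).infs (hx₁.infClosed_setOf h₁.infClosed)) ⟨_, htop⟩
    (by
      rintro ⟨b₀, ⟨hb₀, hxb₀⟩, b₁, ⟨hb₁, hxb₁⟩, h⟩
      exact hcorr.inf_ne_bot h₀₀ h₀ h₁ h₀₀₀ h₀₀₁ hx₀ hx₁ hagree hb₀ hb₁ hxb₀ hxb₁ h)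
  refine ⟨x, hx, (hx.mono (subset_univ _)).eqOn_of_imp hx₀ h₀.compl_mem fun a ha hxa => ?_,
    (hx.mono (subset_univ _)).eqOn_of_imp hx₁ h₁.compl_mem fun a ha hxa => ?_⟩
  · simpa using hxB _ (inf_mem_infs ⟨ha, hxa⟩ ⟨h₁.top_mem, hx₁.1⟩)
  · simpa using hxB _ (inf_mem_infs ⟨h₀.top_mem, hx₀.1⟩ ⟨ha, hxa⟩)

theorem HasLiftingProperty.isCorrectDiagram (hlift : HasLiftingProperty A₀₀ A₀ A₁)
    (h₀₀ : CompleteSubalgebra A₀₀) : IsCorrectDiagram A₀₀ A₀ A₁ := by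
  intro a₀ ha₀ a₁ ha₁ ha₀ne _ hproj
  obtain ⟨x₀, hx₀, hxa₀⟩ := exists_isHomOn_univ_of_infClosed infClosed_singleton
    (singleton_nonempty a₀) (by simpa [eq_comm] using ha₀ne)
  have hxa₀ : x₀ a₀ = true := hxa₀ a₀ rfl
  obtain ⟨x₁, hx₁, hxa₁, hx₁₀⟩ := exists_isHomOn_univ_eqOn_of_inf_ne_bot h₀₀
    (hx₀.mono (subset_univ _)) fun s hs hxs =>
      inf_ne_bot_of_projSub_eq h₀₀ hproj hs (hx₀.ne_bot (hx₀.apply_inf trivial trivial hxa₀ hxs))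
  obtain ⟨x, hx, hxx₀, hxx₁⟩ := hlift x₀ x₁ (hx₀.mono (subset_univ _)) (hx₁.mono (subset_univ _))
    fun a ha => (hx₁₀ ha).symm
  exact hx.ne_bot
    (hx.apply_inf trivial trivial ((hxx₀ a₀ ha₀).trans hxa₀) ((hxx₁ a₁ ha₁).trans hxa₁))

end Diagram

end

/-- Correctness of the diagram `(A00; A0, A1; A)` is equivalent to the lifting property
for points of the Stone spaces. -/
theorem correct_iff_lifting {A : Type*} [CompleteBooleanAlgebra A]
    (A00 A0 A1 : Set A)
    (h00 : CompleteSubalgebra A00) (h0 : CompleteSubalgebra A0)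
    (h1 : CompleteSubalgebra A1)
    (h00_0 : A00 ⊆ A0) (h00_1 : A00 ⊆ A1) :
    (∀ a0 ∈ A0, ∀ a1 ∈ A1, a0 ≠ ⊥ → a1 ≠ ⊥ →
        projSub A00 a0 = projSub A00 a1 → a0 ⊓ a1 ≠ ⊥) ↔
    (∀ x0 x1 : A → Bool, IsHomOn A0 x0 → IsHomOn A1 x1 →
      (∀ a ∈ A00, x0 a = x1 a) →
      ∃ x : A → Bool, IsHomOn (Set.univ : Set A) x ∧
        (∀ a ∈ A0, x a = x0 a) ∧ (∀ a ∈ A1, x a = x1 a)) :=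
  ⟨fun hcorr => IsCorrectDiagram.hasLiftingProperty hcorr h00 h0 h1 h00_0 h00_1,
    fun hlift => HasLiftingProperty.isCorrectDiagram hlift h00⟩
end

section
/- In the topological amalgamated limit setting, if F ⊆ G ⊆ I are finite closed subsets of I and x ∈ Y_F, then there exists y ∈ Y_G with y(j) = x(j) for all j ∈ F. -/
/-- A distributive almost-lattice: a partial order where any two elements have a meet,
any two elements with a common upper bound have a join, among any three elements two have
a common upper bound, the distributive laws hold whenever both sides exist, and
conditions (v) and (vi) hold. -/
structure DistribAlmostLattice (I : Type*) [PartialOrder I] where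
  meet : I → I → I
  join : I → I → I
  /-- (i): `meet i j` is the greatest lower bound of `i` and `j` -/
  meet_isGLB : ∀ i j : I, IsGLB {i, j} (meet i j)
  /-- (ii): if `i`, `j` have a common upper bound, `join i j` is their least upper bound -/
  join_isLUB : ∀ i j : I, (∃ u, i ≤ u ∧ j ≤ u) → IsLUB {i, j} (join i j)
  /-- (iii): among any three elements, two have a common upper bound -/
  two_of_three : ∀ i j k : I,
    (∃ u, i ≤ u ∧ j ≤ u) ∨ (∃ u, i ≤ u ∧ k ≤ u) ∨ (∃ u, j ≤ u ∧ k ≤ u)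
  /-- (iv): distributivity of meet over join (whenever both sides exist) -/
  distrib_meet_join : ∀ i j k : I, (∃ u, j ≤ u ∧ k ≤ u) →
    meet i (join j k) = join (meet i j) (meet i k)
  /-- (iv): distributivity of join over meet (whenever both sides exist) -/
  distrib_join_meet : ∀ i j k : I, (∃ u, i ≤ u ∧ j ≤ u) → (∃ u, i ≤ u ∧ k ≤ u) →
    join i (meet j k) = meet (join i j) (join i k)
  /-- (v) -/
  cond_v : ∀ i j j' : I, ¬(∃ u, i ≤ u ∧ j ≤ u) →
    ((¬(∃ u, i ≤ u ∧ j' ≤ u) ∧ ¬(∃ u, i ≤ u ∧ meet j j' ≤ u)) ∨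
      join i j' = join i (meet j j'))
  /-- (vi) -/
  cond_vi : ∀ i j j' : I, ¬(∃ u, j ≤ u ∧ j' ≤ u) →
    join (meet i j) (meet i j') = i

namespace DistribAlmostLattice

variable {I : Type*} [PartialOrder I] (L : DistribAlmostLattice I)

theorem meet_le_left (i j : I) : L.meet i j ≤ i :=
  (L.meet_isGLB i j).1 (Set.mem_insert _ _)

theorem meet_le_right (i j : I) : L.meet i j ≤ j :=
  (L.meet_isGLB i j).1 (Set.mem_insert_of_mem _ rfl)

theorem le_join_left (i j : I) (h : ∃ u, i ≤ u ∧ j ≤ u) : i ≤ L.join i j :=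
  (L.join_isLUB i j h).1 (Set.mem_insert _ _)

theorem le_join_right (i j : I) (h : ∃ u, i ≤ u ∧ j ≤ u) : j ≤ L.join i j :=
  (L.join_isLUB i j h).1 (Set.mem_insert_of_mem _ rfl)

end DistribAlmostLattice

/-- A subset `F` of a distributive almost-lattice is closed if it is closed under meets
and under joins whenever they exist. -/
def IsClosedSubset {I : Type*} [PartialOrder I] (L : DistribAlmostLattice I)
    (F : Set I) : Prop :=
  ∀ i ∈ F, ∀ j ∈ F, L.meet i j ∈ F ∧ ((∃ u, i ≤ u ∧ j ≤ u) → L.join i j ∈ F)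

section TopAmal

variable {I : Type*} [PartialOrder I]
variable (X : I → Type*) (p : ∀ i j : I, i ≤ j → X j → X i)

/-- Membership in the topological amalgamated limit `X_ℓ ⊆ Π_{i∈I} X_i`. -/
def InXl (x : ∀ i, X i) : Prop :=
  ∀ i j : I, ∀ hij : i ≤ j, p i j hij (x j) = x i

/-- Membership in `Y_F`: threads indexed by a subset `F ⊆ I`. -/
def InY (F : Set I) (y : ∀ i, X i) : Prop :=
  ∀ k ∈ F, ∀ j ∈ F, ∀ h : k ≤ j, p k j h (y j) = y k

end TopAmal

/-!
A finite closed `G` has at most two maximal elements `M₁, M₂`: three pairwise distinct maximal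
elements would, by (iii), include two with a common upper bound, and their join, which lies
in `G`, would strictly exceed one of them. So a thread over `G` amounts to points
`Z₁ ∈ X_{M₁}`, `Z₂ ∈ X_{M₂}` that agree below `M₁ ∧ M₂`.
The part of `F` below `M₁` and the part of `F` not below `M₁` are join-closed, hence have
greatest elements `f₁` and `f₂`. Correctness, applied first to `f₁` and `M₁ ∧ f₂` inside `M₁`,
then to `M₁ ∧ M₂` and `f₂` inside `M₂`, produces `Z₁` and `Z₂` lifting `x`.
-/

open Set

namespace DistribAlmostLattice

variable {I : Type*} [PartialOrder I] (L : DistribAlmostLattice I)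

def JoinClosed (S : Set I) : Prop :=
  ∀ s ∈ S, ∀ t ∈ S, (∃ u, s ≤ u ∧ t ≤ u) → L.join s t ∈ S

theorem le_meet {i j k : I} (hi : k ≤ i) (hj : k ≤ j) : k ≤ L.meet i j :=
  (L.meet_isGLB i j).2 (by rintro _ (rfl | rfl) <;> assumption)

theorem join_le {i j k : I} (hub : ∃ u, i ≤ u ∧ j ≤ u) (hi : i ≤ k) (hj : j ≤ k) :
    L.join i j ≤ k :=
  (L.join_isLUB i j hub).2 (by rintro _ (rfl | rfl) <;> assumption)

variable {L}

theorem JoinClosed.inter_Iic {S : Set I} (hS : L.JoinClosed S) (M : I) :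
    L.JoinClosed (S ∩ Iic M) :=
  fun s hs t ht hub => ⟨hS s hs.1 t ht.1 hub, L.join_le hub hs.2 ht.2⟩

theorem JoinClosed.diff_Iic {S : Set I} (hS : L.JoinClosed S) (M : I) :
    L.JoinClosed (S \ Iic M) :=
  fun s hs t ht hub => ⟨hS s hs.1 t ht.1 hub, fun h => hs.2 ((L.le_join_left s t hub).trans h)⟩

theorem JoinClosed.le_of_maximal {S : Set I} (hS : L.JoinClosed S) {m s : I}
    (hm : Maximal (· ∈ S) m) (hs : s ∈ S) (hub : ∃ u, m ≤ u ∧ s ≤ u) : s ≤ m :=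
  (L.le_join_right m s hub).trans (hm.2 (hS m hm.1 s hs hub) (L.le_join_left m s hub))

theorem JoinClosed.exists_isGreatest {S : Set I} (hS : L.JoinClosed S) (hfin : S.Finite)
    (hne : S.Nonempty) (hbdd : BddAbove S) : ∃ m, IsGreatest S m := by
  obtain ⟨m, hm⟩ := hfin.exists_maximal hne
  obtain ⟨B, hB⟩ := hbdd
  exact ⟨m, hm.1, fun s hs => hS.le_of_maximal hm hs ⟨B, hB hm.1, hB hs⟩⟩

end DistribAlmostLattice

namespace IsClosedSubset

open DistribAlmostLattice

variable {I : Type*} [PartialOrder I] {L : DistribAlmostLattice I} {G : Set I}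

theorem joinClosed (hG : IsClosedSubset L G) : L.JoinClosed G :=
  fun s hs t ht => (hG s hs t ht).2

theorem exists_cover (hGcl : IsClosedSubset L G) (hG : G.Finite) (hne : G.Nonempty) :
    ∃ M₁ M₂ : I, ∀ g ∈ G, g ≤ M₁ ∨ g ≤ M₂ := by
  obtain ⟨M₁, hM₁⟩ := hG.exists_maximal hne
  by_cases hdir : ∀ g ∈ G, g ≤ M₁
  · exact ⟨M₁, M₁, fun g hg => .inl (hdir g hg)⟩
  obtain ⟨g₀, hg₀, hg₀M₁⟩ := not_forall₂.mp hdir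
  obtain ⟨M₂, hg₀M₂, hM₂⟩ := hG.exists_le_maximal hg₀
  refine ⟨M₁, M₂, fun g hg => ?_⟩
  obtain ⟨M₃, hgM₃, hM₃⟩ := hG.exists_le_maximal hg
  have hj := hGcl.joinClosed
  rcases L.two_of_three M₁ M₂ M₃ with h | h | h
  · exact absurd (hg₀M₂.trans (hj.le_of_maximal hM₁ hM₂.1 h)) hg₀M₁
  · exact .inl (hgM₃.trans (hj.le_of_maximal hM₁ hM₃.1 h))
  · exact .inr (hgM₃.trans (hj.le_of_maximal hM₂ hM₃.1 h))

end IsClosedSubset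

namespace AmalgamatedLimit

open DistribAlmostLattice

variable {I : Type*} [PartialOrder I] {X : I → Type*} (p : ∀ i j : I, i ≤ j → X j → X i)

def Commutes : Prop :=
  ∀ i j k : I, ∀ hij : i ≤ j, ∀ hjk : j ≤ k, ∀ x : X k,
    p i j hij (p j k hjk x) = p i k (hij.trans hjk) x

def IsCorrect (L : DistribAlmostLattice I) : Prop :=
  ∀ i j : I, ∀ hub : ∃ u, i ≤ u ∧ j ≤ u, ∀ xi : X i, ∀ xj : X j,
    p (L.meet i j) i (L.meet_le_left i j) xi = p (L.meet i j) j (L.meet_le_right i j) xj →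
    ∃ z : X (L.join i j),
      p i (L.join i j) (L.le_join_left i j hub) z = xi ∧
      p j (L.join i j) (L.le_join_right i j hub) z = xj

def Compatible {i j : I} (a : X i) (b : X j) : Prop :=
  ∀ k (hi : k ≤ i) (hj : k ≤ j), p k i hi a = p k j hj b

def LiftsOn (S : Set I) (x : ∀ i, X i) {B : I} (Z : X B) : Prop :=
  ∀ s ∈ S, ∀ h : s ≤ B, p s B h Z = x s

variable {p}

theorem Compatible.symm {i j : I} {a : X i} {b : X j} (h : Compatible p a b) :
    Compatible p b a :=
  fun k hj hi => (h k hi hj).symm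

theorem Compatible.proj_left (hcomp : Commutes p) {i i' j : I} {a : X i} {b : X j}
    (h : Compatible p a b) (hi' : i' ≤ i) : Compatible p (p i' i hi' a) b :=
  fun k hk hj => by rw [hcomp]; exact h k _ hj

theorem Compatible.proj_right (hcomp : Commutes p) {i j j' : I} {a : X i} {b : X j}
    (h : Compatible p a b) (hj' : j' ≤ j) : Compatible p a (p j' j hj' b) :=
  (h.symm.proj_left hcomp hj').symm

theorem compatible_of_proj_meet_eq (L : DistribAlmostLattice I) (hcomp : Commutes p)
    {i j : I} {a : X i} {b : X j}
    (h : p (L.meet i j) i (L.meet_le_left i j) a = p (L.meet i j) j (L.meet_le_right i j) b) :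
    Compatible p a b := fun k hi hj => by
  have hk := L.le_meet hi hj
  calc p k i hi a = p k _ hk (p _ i (L.meet_le_left i j) a) := (hcomp _ _ _ _ _ a).symm
    _ = p k _ hk (p _ j (L.meet_le_right i j) b) := by rw [h]
    _ = p k j hj b := hcomp _ _ _ _ _ b

theorem _root_.InY.compatible {L : DistribAlmostLattice I} (hcomp : Commutes p) {F : Set I}
    (hF : IsClosedSubset L F) {x : ∀ i, X i} (hx : InY X p F x) {i j : I} (hi : i ∈ F)
    (hj : j ∈ F) : Compatible p (x i) (x j) :=
  compatible_of_proj_meet_eq L hcomp <| by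
    rw [hx _ (hF i hi j hj).1 i hi, hx _ (hF i hi j hj).1 j hj]

theorem exists_compatible (L : DistribAlmostLattice I)
    (hsurj : ∀ i j : I, ∀ hij : i ≤ j, Function.Surjective (p i j hij)) (hcomp : Commutes p)
    {M₁ : I} (Z₁ : X M₁) (M₂ : I) : ∃ Z₂ : X M₂, Compatible p Z₁ Z₂ := by
  obtain ⟨Z₂, hZ₂⟩ := hsurj _ M₂ (L.meet_le_right M₁ M₂) (p _ M₁ (L.meet_le_left M₁ M₂) Z₁)
  exact ⟨Z₂, compatible_of_proj_meet_eq L hcomp hZ₂.symm⟩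

theorem Compatible.exists_amalgam (L : DistribAlmostLattice I)
    (hsurj : ∀ i j : I, ∀ hij : i ≤ j, Function.Surjective (p i j hij)) (hcomp : Commutes p)
    (hcor : IsCorrect p L)
    {i j B : I} {a : X i} {b : X j} (hab : Compatible p a b) (hi : i ≤ B) (hj : j ≤ B) :
    ∃ Z : X B, p i B hi Z = a ∧ p j B hj Z = b := by
  have hub : ∃ u, i ≤ u ∧ j ≤ u := ⟨B, hi, hj⟩
  obtain ⟨V, hVa, hVb⟩ := hcor i j hub a b (hab _ _ _)
  obtain ⟨Z, rfl⟩ := hsurj _ B (L.join_le hub hi hj) V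
  exact ⟨Z, by rwa [hcomp] at hVa, by rwa [hcomp] at hVb⟩

theorem liftsOn_of_proj_eq (hcomp : Commutes p) {S : Set I} {x : ∀ i, X i}
    (hx : InY X p S x) {t B : I} (ht : t ∈ S) (htop : ∀ s ∈ S, s ≤ B → s ≤ t) (htB : t ≤ B)
    {Z : X B} (hZ : p t B htB Z = x t) : LiftsOn p S x Z :=
  fun s hs hsB => by rw [← hx s hs t ht (htop s hs hsB), ← hZ, hcomp]

theorem exists_liftsOn (L : DistribAlmostLattice I) [∀ i, Nonempty (X i)]
    (hsurj : ∀ i j : I, ∀ hij : i ≤ j, Function.Surjective (p i j hij)) (hcomp : Commutes p)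
    {S : Set I} (hS : S.Finite) (hjoin : L.JoinClosed S) {B : I} (hB : ∀ s ∈ S, s ≤ B)
    {x : ∀ i, X i} (hx : InY X p S x) : ∃ Z : X B, LiftsOn p S x Z := by
  rcases S.eq_empty_or_nonempty with rfl | hne
  · exact ⟨Classical.arbitrary _, fun s hs => hs.elim⟩
  obtain ⟨t, ht, htop⟩ := hjoin.exists_isGreatest hS hne ⟨B, hB⟩
  obtain ⟨Z, hZ⟩ := hsurj t B (hB t ht) (x t)
  exact ⟨Z, liftsOn_of_proj_eq hcomp hx ht (fun s hs _ => htop hs) (hB t ht) hZ⟩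

theorem exists_compatible_liftsOn_of_subset (L : DistribAlmostLattice I)
    [∀ i, Nonempty (X i)]
    (hsurj : ∀ i j : I, ∀ hij : i ≤ j, Function.Surjective (p i j hij)) (hcomp : Commutes p)
    {F : Set I} (hF : F.Finite) (hFj : L.JoinClosed F) {x : ∀ i, X i} (hx : InY X p F x)
    {M₁ : I} (hFM₁ : ∀ f ∈ F, f ≤ M₁) (M₂ : I) :
    ∃ (Z₁ : X M₁) (Z₂ : X M₂), Compatible p Z₁ Z₂ ∧ LiftsOn p F x Z₁ ∧ LiftsOn p F x Z₂ := by
  obtain ⟨Z₁, hZ₁⟩ := exists_liftsOn L hsurj hcomp hF hFj hFM₁ hx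
  obtain ⟨Z₂, hZ⟩ := exists_compatible L hsurj hcomp Z₁ M₂
  exact ⟨Z₁, Z₂, hZ, hZ₁, fun f hf hfM₂ => (hZ f (hFM₁ f hf) hfM₂).symm.trans (hZ₁ f hf _)⟩

theorem exists_compatible_liftsOn_of_nonempty (L : DistribAlmostLattice I)
    (hsurj : ∀ i j : I, ∀ hij : i ≤ j, Function.Surjective (p i j hij)) (hcomp : Commutes p)
    (hcor : IsCorrect p L)
    {F : Set I} (hF : F.Finite) (hFcl : IsClosedSubset L F) {x : ∀ i, X i} (hx : InY X p F x)
    {M₁ M₂ : I} (hcover : ∀ f ∈ F, f ≤ M₁ ∨ f ≤ M₂)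
    (hne₁ : (F ∩ Iic M₁).Nonempty) (hne₂ : (F \ Iic M₁).Nonempty) :
    ∃ (Z₁ : X M₁) (Z₂ : X M₂), Compatible p Z₁ Z₂ ∧ LiftsOn p F x Z₁ ∧ LiftsOn p F x Z₂ := by
  have hj := hFcl.joinClosed
  obtain ⟨f₁, ⟨hf₁F, hf₁M₁⟩, hf₁top⟩ := (hj.inter_Iic M₁).exists_isGreatest
    (hF.subset inter_subset_left) hne₁ ⟨M₁, fun f hf => hf.2⟩
  obtain ⟨f₂, ⟨hf₂F, hf₂M₁⟩, hf₂top⟩ := (hj.diff_Iic M₁).exists_isGreatest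
    (hF.subset sdiff_subset) hne₂ ⟨M₂, fun f hf => (hcover f hf.1).resolve_left hf.2⟩
  have hf₂M₂ : f₂ ≤ M₂ := (hcover f₂ hf₂F).resolve_left hf₂M₁
  obtain ⟨Z₁, hZ₁f₁, hZ₁f₂⟩ := ((hx.compatible hcomp hFcl hf₁F hf₂F).proj_right hcomp
    (L.meet_le_right M₁ f₂)).exists_amalgam L hsurj hcomp hcor hf₁M₁ (L.meet_le_left M₁ f₂)
  have hZ₁x : Compatible p Z₁ (x f₂) := compatible_of_proj_meet_eq L hcomp hZ₁f₂
  obtain ⟨Z₂, hZ₂D, hZ₂f₂⟩ := (hZ₁x.proj_left hcomp (L.meet_le_left M₁ M₂)).exists_amalgam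
    L hsurj hcomp hcor (L.meet_le_right M₁ M₂) hf₂M₂
  have hZ : Compatible p Z₁ Z₂ := compatible_of_proj_meet_eq L hcomp hZ₂D.symm
  have hZ₁ : LiftsOn p F x Z₁ :=
    liftsOn_of_proj_eq hcomp hx hf₁F (fun f hf hfM₁ => hf₁top ⟨hf, hfM₁⟩) hf₁M₁ hZ₁f₁
  refine ⟨Z₁, Z₂, hZ, hZ₁, fun f hf hfM₂ => ?_⟩
  by_cases hfM₁ : f ≤ M₁
  · exact (hZ f hfM₁ hfM₂).symm.trans (hZ₁ f hf hfM₁)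
  · rw [← hx f hf f₂ hf₂F (hf₂top ⟨hf, hfM₁⟩), ← hZ₂f₂, hcomp]

theorem exists_compatible_liftsOn (L : DistribAlmostLattice I) [∀ i, Nonempty (X i)]
    (hsurj : ∀ i j : I, ∀ hij : i ≤ j, Function.Surjective (p i j hij)) (hcomp : Commutes p)
    (hcor : IsCorrect p L)
    {F : Set I} (hF : F.Finite) (hFcl : IsClosedSubset L F) {x : ∀ i, X i} (hx : InY X p F x)
    {M₁ M₂ : I} (hcover : ∀ f ∈ F, f ≤ M₁ ∨ f ≤ M₂) :
    ∃ (Z₁ : X M₁) (Z₂ : X M₂), Compatible p Z₁ Z₂ ∧ LiftsOn p F x Z₁ ∧ LiftsOn p F x Z₂ := by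
  by_cases hne₂ : (F \ Iic M₁).Nonempty
  · by_cases hne₁ : (F ∩ Iic M₁).Nonempty
    · exact exists_compatible_liftsOn_of_nonempty L hsurj hcomp hcor hF hFcl hx hcover hne₁ hne₂
    have hFM₂ : ∀ f ∈ F, f ≤ M₂ := fun f hf =>
      (hcover f hf).resolve_left fun hfM₁ => hne₁ ⟨f, hf, hfM₁⟩
    obtain ⟨Z₂, Z₁, hZ, hZ₂, hZ₁⟩ :=
      exists_compatible_liftsOn_of_subset L hsurj hcomp hF hFcl.joinClosed hx hFM₂ M₁
    exact ⟨Z₁, Z₂, hZ.symm, hZ₁, hZ₂⟩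
  · have hFM₁ : ∀ f ∈ F, f ≤ M₁ := fun f hf => by_contra fun hfM₁ => hne₂ ⟨f, hf, hfM₁⟩
    exact exists_compatible_liftsOn_of_subset L hsurj hcomp hF hFcl.joinClosed hx hFM₁ M₂

theorem Compatible.exists_glue [∀ i, Nonempty (X i)] {M₁ M₂ : I} {Z₁ : X M₁} {Z₂ : X M₂}
    (h : Compatible p Z₁ Z₂) :
    ∃ y : ∀ i, X i, (∀ i (hi : i ≤ M₁), y i = p i M₁ hi Z₁) ∧
      ∀ i (hi : i ≤ M₂), y i = p i M₂ hi Z₂ := by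
  classical
  refine ⟨fun i => if hi : i ≤ M₁ then p i M₁ hi Z₁
      else if hi' : i ≤ M₂ then p i M₂ hi' Z₂ else Classical.arbitrary _,
    fun i hi => dif_pos hi, fun i hi => ?_⟩
  dsimp only
  by_cases hi₁ : i ≤ M₁
  · rw [dif_pos hi₁]
    exact h i hi₁ hi
  · rw [dif_neg hi₁, dif_pos hi]

end AmalgamatedLimit

theorem thread_extends_finite_closed_general
    {I : Type*} [PartialOrder I] (L : DistribAlmostLattice I)
    (X : I → Type*)
    [∀ i, Nonempty (X i)]
    (p : ∀ i j : I, i ≤ j → X j → X i)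
    (hsurj : ∀ i j : I, ∀ hij : i ≤ j, Function.Surjective (p i j hij))
    (hcomp : ∀ i j k : I, ∀ hij : i ≤ j, ∀ hjk : j ≤ k, ∀ x : X k,
      p i j hij (p j k hjk x) = p i k (hij.trans hjk) x)
    (hcor : ∀ i j : I, ∀ hub : ∃ u, i ≤ u ∧ j ≤ u, ∀ xi : X i, ∀ xj : X j,
      p (L.meet i j) i (L.meet_le_left i j) xi =
        p (L.meet i j) j (L.meet_le_right i j) xj →
      ∃ z : X (L.join i j),
        p i (L.join i j) (L.le_join_left i j hub) z = xi ∧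
        p j (L.join i j) (L.le_join_right i j hub) z = xj)
    (F G : Set I) (hG : G.Finite) (hFG : F ⊆ G)
    (hFcl : IsClosedSubset L F) (hGcl : IsClosedSubset L G)
    (x : ∀ i, X i) (hx : InY X p F x) :
    ∃ y : ∀ i, X i, InY X p G y ∧ ∀ j ∈ F, y j = x j := by
  rcases G.eq_empty_or_nonempty with rfl | hGne
  · exact ⟨fun _ => Classical.arbitrary _, fun k hk => hk.elim, fun j hj => (hFG hj).elim⟩
  obtain ⟨M₁, M₂, hcover⟩ := hGcl.exists_cover hG hGne
  obtain ⟨Z₁, Z₂, hZ, hZ₁, hZ₂⟩ := AmalgamatedLimit.exists_compatible_liftsOn L hsurj hcomp hcor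
    (hG.subset hFG) hFcl hx fun f hf => hcover f (hFG hf)
  obtain ⟨y, hy₁, hy₂⟩ := hZ.exists_glue
  refine ⟨y, fun k _ j hj hkj => ?_, fun j hj => ?_⟩
  · rcases hcover j hj with hjM | hjM
    · rw [hy₁ j hjM, hy₁ k (hkj.trans hjM), hcomp]
    · rw [hy₂ j hjM, hy₂ k (hkj.trans hjM), hcomp]
  · rcases hcover j (hFG hj) with hjM | hjM
    · rw [hy₁ j hjM, hZ₁ j hj hjM]
    · rw [hy₂ j hjM, hZ₂ j hj hjM]

/-- Any thread over a finite closed `F ⊆ I` extends to a thread over any larger finite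
closed `G ⊆ I`. -/
theorem thread_extends_finite_closed
    {I : Type*} [PartialOrder I] (L : DistribAlmostLattice I)
    (X : I → Type*) [∀ i, TopologicalSpace (X i)]
    [∀ i, Nonempty (X i)] [∀ i, CompactSpace (X i)] [∀ i, T2Space (X i)]
    (p : ∀ i j : I, i ≤ j → X j → X i)
    (hcont : ∀ i j : I, ∀ hij : i ≤ j, Continuous (p i j hij))
    (hopen : ∀ i j : I, ∀ hij : i ≤ j, IsOpenMap (p i j hij))
    (hsurj : ∀ i j : I, ∀ hij : i ≤ j, Function.Surjective (p i j hij))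
    (hid : ∀ i : I, ∀ hii : i ≤ i, ∀ x : X i, p i i hii x = x)
    (hcomp : ∀ i j k : I, ∀ hij : i ≤ j, ∀ hjk : j ≤ k, ∀ x : X k,
      p i j hij (p j k hjk x) = p i k (hij.trans hjk) x)
    (hcor : ∀ i j : I, ∀ hub : ∃ u, i ≤ u ∧ j ≤ u, ∀ xi : X i, ∀ xj : X j,
      p (L.meet i j) i (L.meet_le_left i j) xi =
        p (L.meet i j) j (L.meet_le_right i j) xj →
      ∃ z : X (L.join i j),
        p i (L.join i j) (L.le_join_left i j hub) z = xi ∧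
        p j (L.join i j) (L.le_join_right i j hub) z = xj)
    (F G : Set I) (hF : F.Finite) (hG : G.Finite) (hFG : F ⊆ G)
    (hFcl : IsClosedSubset L F) (hGcl : IsClosedSubset L G)
    (x : ∀ i, X i) (hx : InY X p F x) :
    ∃ y : ∀ i, X i, InY X p G y ∧ ∀ j ∈ F, y j = x j :=
  thread_extends_finite_closed_general L X p hsurj hcomp hcor F G hG hFG hFcl hGcl x hx
end
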